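/- In the marked cycle on Z_k with start 0 and end x (0 < x < k), suppose the marked nodes strictly between x and k are i_1 < i_2 < … < i_r with r ≥ 2, and all other marked nodes lie in {0,…,x}. Then for each l ∈ {1,…,r−1}, the path a^{k−i_{l+1}−1} d c^{k−i_{l+1}−1+i_l} b a^{i_l − x} is a valid path of length 2k − 2(i_{l+1} − i_l) − x. -/
import Mathlib


/-- The four move types in the marked cycle. -/
inductive Move : Type
  | a | b | c | d
deriving DecidableEq

/-- Where a move from node `x` in `ZMod k` leads. -/
def Move.step {k : ℕ} (x : ZMod k) : Move → ZMod k
  | .a => x - 1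
  | .b => x
  | .c => x + 1
  | .d => x

/-- The node covered by a move performed from node `x`. -/
def Move.covers {k : ℕ} (x : ZMod k) : Move → ZMod k
  | .a => x - 1
  | .b => x
  | .c => x
  | .d => x - 1

/-- The node reached after performing a sequence of moves starting at `s`. -/
def endAt {k : ℕ} (s : ZMod k) : List Move → ZMod k
  | [] => s
  | m :: ms => endAt (Move.step s m) ms

/-- The set of nodes covered by a sequence of moves starting at `s`. -/
def coveredSet {k : ℕ} (s : ZMod k) : List Move → Set (ZMod k)
  | [] => ∅
  | m :: ms => insert (Move.covers s m) (coveredSet (Move.step s m) ms)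

/-- A valid path in the marked cycle on `ZMod k` with marked set `B`, start `s`,
end `t`: a nonempty sequence of moves from `s` to `t` covering every node of `B`. -/
def ValidPath {k : ℕ} (B : Set (ZMod k)) (s t : ZMod k) (p : List Move) : Prop :=
  p ≠ [] ∧ endAt s p = t ∧ B ⊆ coveredSet s p

/-- A shortest valid path: valid and of minimum length among all valid paths. -/
def ShortestPath {k : ℕ} (B : Set (ZMod k)) (s t : ZMod k) (p : List Move) : Prop :=
  ValidPath B s t p ∧ ∀ q : List Move, ValidPath B s t q → p.length ≤ q.length

lemma endAt_append {k : ℕ} (s : ZMod k) (p q : List Move) :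
    endAt s (p ++ q) = endAt (endAt s p) q := by
  induction p generalizing s with
  | nil => simp [endAt]
  | cons m ms ih => simp [endAt, ih]

lemma coveredSet_append {k : ℕ} (s : ZMod k) (p q : List Move) :
    coveredSet s (p ++ q) = coveredSet s p ∪ coveredSet (endAt s p) q := by
  induction p generalizing s with
  | nil => simp [coveredSet, endAt]
  | cons m ms ih => simp [coveredSet, endAt, ih, Set.insert_union]

lemma endAt_rep_a {k : ℕ} (s : ZMod k) (n : ℕ) :
    endAt s (List.replicate n Move.a) = s - n := by
  induction n generalizing s with
  | zero => simp [endAt]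
  | succ n ih =>
    rw [List.replicate_succ]
    simp only [endAt, Move.step, ih]
    push_cast; ring

lemma endAt_rep_c {k : ℕ} (s : ZMod k) (n : ℕ) :
    endAt s (List.replicate n Move.c) = s + n := by
  induction n generalizing s with
  | zero => simp [endAt]
  | succ n ih =>
    rw [List.replicate_succ]
    simp only [endAt, Move.step, ih]
    push_cast; ring

lemma mem_cov_a {k : ℕ} (s : ZMod k) {n j : ℕ} (hj : j < n) :
    s - ((j : ZMod k) + 1) ∈ coveredSet s (List.replicate n Move.a) := by
  induction n generalizing s j with
  | zero => omega
  | succ n ih =>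
    rw [List.replicate_succ]
    simp only [coveredSet, Move.step, Move.covers]
    rcases Nat.eq_zero_or_pos j with h | h
    · subst h; left; simp
    · right
      obtain ⟨j', rfl⟩ : ∃ j', j = j' + 1 := ⟨j - 1, by omega⟩
      have := ih (s := s - 1) (j := j') (by omega)
      convert this using 1
      push_cast; ring

lemma mem_cov_c {k : ℕ} (s : ZMod k) {n j : ℕ} (hj : j < n) :
    s + (j : ZMod k) ∈ coveredSet s (List.replicate n Move.c) := by
  induction n generalizing s j with
  | zero => omega
  | succ n ih =>
    rw [List.replicate_succ]
    simp only [coveredSet, Move.step, Move.covers]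
    rcases Nat.eq_zero_or_pos j with h | h
    · subst h; left; simp
    · right
      obtain ⟨j', rfl⟩ : ∃ j', j = j' + 1 := ⟨j - 1, by omega⟩
      have := ih (s := s + 1) (j := j') (by omega)
      convert this using 1
      push_cast; ring

/-- start 0, end x (0 < x < k); the marked nodes strictly between x and
k are exactly i₁ < i₂ < … < i_r (r ≥ 2) and all other marked nodes lie in {0,…,x}.
Then for each l ∈ {1,…,r−1}, the path a^{k−i_{l+1}−1} d c^{k−i_{l+1}−1+i_l} b
a^{i_l−x} is a valid path of length 2k − 2(i_{l+1} − i_l) − x. -/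
theorem two_turn_paths_valid (k x r : ℕ) (hk : 2 ≤ k) (hx : 0 < x) (hr : 2 ≤ r)
    (i : Fin r → ℕ) (hmono : StrictMono i) (hrange : ∀ l, x < i l ∧ i l < k)
    (B : Set (ZMod k)) (hmem : ∀ l, ((i l : ℕ) : ZMod k) ∈ B)
    (hB : ∀ y ∈ B, y.val ≤ x ∨ ∃ l : Fin r, y = ((i l : ℕ) : ZMod k)) :
    ∀ (l : Fin r) (h : (l : ℕ) + 1 < r),
      ValidPath B 0 (x : ZMod k)
        (List.replicate (k - i ⟨(l : ℕ) + 1, h⟩ - 1) Move.a ++ [Move.d] ++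
          List.replicate (k - i ⟨(l : ℕ) + 1, h⟩ - 1 + i l) Move.c ++ [Move.b] ++
          List.replicate (i l - x) Move.a) ∧
      (List.replicate (k - i ⟨(l : ℕ) + 1, h⟩ - 1) Move.a ++ [Move.d] ++
        List.replicate (k - i ⟨(l : ℕ) + 1, h⟩ - 1 + i l) Move.c ++ [Move.b] ++
        List.replicate (i l - x) Move.a).length =
        2 * k - 2 * (i ⟨(l : ℕ) + 1, h⟩ - i l) - x := by
  intro l h
  haveI : NeZero k := ⟨by omega⟩
  set i₁ := i l with hi₁
  set i₂ := i ⟨(l : ℕ) + 1, h⟩ with hi₂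
  have h12 : i₁ < i₂ := hmono (by simp [Fin.lt_def])
  set p := k - i₂ - 1 with hp
  set q := k - i₂ - 1 + i₁ with hq
  set s' := i₁ - x with hs'
  clear_value s' q p i₂ i₁
  have hx1 : x < i₁ := by rw [hi₁]; exact (hrange l).1
  have hk1 : i₁ < k := by rw [hi₁]; exact (hrange l).2
  have hx2 : x < i₂ := by rw [hi₂]; exact (hrange ⟨(l : ℕ) + 1, h⟩).1
  have hk2 : i₂ < k := by rw [hi₂]; exact (hrange ⟨(l : ℕ) + 1, h⟩).2
  have key : ∀ a b : ℕ, a = b + k → ((a : ℕ) : ZMod k) = ((b : ℕ) : ZMod k) := by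
    intro a b hab
    subst hab
    push_cast [ZMod.natCast_self]
    ring
  have e1 : endAt (0 : ZMod k) (List.replicate p Move.a) = (i₂ : ZMod k) + 1 := by
    rw [endAt_rep_a]
    have n1 : p + (i₂ + 1) = 0 + k := by rw [hp]; omega
    have := key (p + (i₂ + 1)) 0 n1
    push_cast [ZMod.natCast_self] at this
    linear_combination -this
  have hc : ((i₂ : ZMod k) + 1) + (q : ZMod k) = (i₁ : ZMod k) := by
    have n2 : i₂ + 1 + q = i₁ + k := by rw [hq]; omega
    have := key (i₂ + 1 + q) i₁ n2
    push_cast [ZMod.natCast_self] at this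
    linear_combination this
  refine ⟨⟨by simp, ?_, ?_⟩, ?_⟩
  · -- endAt = x
    rw [endAt_append, endAt_append, endAt_append, endAt_append, e1]
    simp only [endAt, Move.step, endAt_rep_c, endAt_rep_a]
    rw [hc]
    have n3 : x + s' = i₁ := by rw [hs']; omega
    have hxs : ((x + s' : ℕ) : ZMod k) = ((i₁ : ℕ) : ZMod k) := by rw [n3]
    push_cast at hxs
    linear_combination -hxs
  · -- coverage
    intro y hy
    rw [coveredSet_append, coveredSet_append, coveredSet_append, coveredSet_append, e1]
    rw [endAt_append, endAt_append, endAt_append, e1]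
    simp only [endAt, Move.step, endAt_rep_c, coveredSet, Move.covers]
    simp only [Set.mem_union, Set.mem_insert_iff, Set.mem_empty_iff_false, or_false]
    have cov_c : ∀ m : ℕ, m < i₁ →
        (m : ZMod k) ∈ coveredSet ((i₂ : ZMod k) + 1) (List.replicate q Move.c) := by
      intro m hm'
      have hj : p + m < q := by rw [hp, hq]; omega
      have hmm := mem_cov_c (k := k) ((i₂ : ZMod k) + 1) hj
      have he : ((i₂ : ZMod k) + 1) + ((p + m : ℕ) : ZMod k) = (m : ZMod k) := by
        have n4 : i₂ + 1 + (p + m) = m + k := by rw [hp]; omega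
        have := key (i₂ + 1 + (p + m)) m n4
        push_cast [ZMod.natCast_self] at this
        push_cast
        linear_combination this
      rwa [he] at hmm
    rcases hB y hy with hyx | ⟨m, rfl⟩
    · -- y.val ≤ x
      have hyv : ((y.val : ℕ) : ZMod k) = y := by
        simp [ZMod.natCast_val, ZMod.cast_id]
      have := cov_c y.val (by omega)
      rw [hyv] at this
      tauto
    · rcases Nat.lt_trichotomy (m : ℕ) (l : ℕ) with hm | hm | hm
      · -- i m < i₁
        have h1 : i m < i₁ := by rw [hi₁]; exact hmono (Fin.lt_def.mpr hm)
        have := cov_c (i m) h1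
        tauto
      · -- m = l
        have hml : m = l := Fin.ext hm
        have him : i m = i₁ := by rw [hml, ← hi₁]
        have : ((i m : ℕ) : ZMod k) = ((i₂ : ZMod k) + 1) + (q : ZMod k) := by
          rw [him]; exact hc.symm
        tauto
      · rcases Nat.eq_or_lt_of_le hm with hm' | hm'
        · -- m = l + 1 : y = i₂, covered by d
          have hml : m = ⟨(l : ℕ) + 1, h⟩ := Fin.ext hm'.symm
          have him : i m = i₂ := by rw [hml, ← hi₂]
          have : ((i m : ℕ) : ZMod k) = ((i₂ : ZMod k) + 1) - 1 := by
            rw [him]; ring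
          tauto
        · -- i m > i₂ : covered by initial a-moves
          have him : i₂ < i m := by
            rw [hi₂]; exact hmono (Fin.lt_def.mpr (by simpa using hm'))
          have hikm : i m < k := (hrange m).2
          have hj : k - i m - 1 < p := by rw [hp]; omega
          have hmm := mem_cov_a (k := k) (0 : ZMod k) hj
          have he : (0 : ZMod k) - (((k - i m - 1 : ℕ) : ZMod k) + 1) = ((i m : ℕ) : ZMod k) := by
            have n5 : k - i m - 1 + 1 + i m = 0 + k := by omega
            have := key (k - i m - 1 + 1 + i m) 0 n5
            push_cast [ZMod.natCast_self] at this
            push_cast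
            linear_combination -this
          rw [he] at hmm
          tauto
  · -- length
    simp only [List.length_append, List.length_replicate, List.length_cons,
      List.length_nil]
    omega
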